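/- arXiv:1907.04836 — 2 statements merged into one kernel-verified Lean document; each statement's English description precedes it below -/
import Mathlib

section
/- Set ℓ̃^∞ = ℓ^∞·(ad−bc)/(c²·ω_+·ω_−). Then for every z ∈ ℂ with c·z + d ≠ 0 and z ≠ z_r for all r ∈ {1,…,N}: ( −ℓ̃^∞ · φ̃_+(f(z)) · φ̃_−(f(z)) ) · (ad−bc)/(c·z+d)² = −ℓ^∞ · φ_+(z) · φ_−(z). That is, under the change of spectral parameter z̃ = f(z) the twist function φ = −ℓ^∞ φ_+ φ_− transforms as a 1-form into the factorised gauged twist function φ̃ = −ℓ̃^∞ φ̃_+ φ̃_−. -/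
/-!
For the Möbius map `f(u) = (au + b)/(cu + d)` one has
`f(u) - f(v) = (ad - bc)(u - v)/((cu + d)(cv + d))` and `f(u) - a/c = -(ad - bc)/(c(cu + d))`.
Hence every factor of `φ̃_±(f(u))` is the corresponding factor of `φ_±(u)` up to an explicit
scalar: the `N` factors `(ad - bc)/(cu + d)` cancel between numerator and denominator, the
factors `cζ^±_i + d`, `cz_r + d` combine into `ω_±`, and the extra pole `z̃_{N+1} = a/c`
contributes `-c(cu + d)/(ad - bc)`. Squaring the latter against the Jacobian
`(ad - bc)/(cu + d)²` is exactly compensated by the choice of `ℓ̃^∞`.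
-/

/-- The factorised twist function `φ_±(w) = ∏_i (w - ζ^±_i) / ∏_r (w - z_r)`. -/
noncomputable def phiFull (N : ℕ) (z ζ : Fin N → ℂ) (w : ℂ) : ℂ :=
  (∏ i, (w - ζ i)) / ∏ r, (w - z r)

/-- The factorised gauged twist function
`φ̃_±(z̃) = ∏_{i≤N} (z̃ - ζ̃^±_i) / ∏_{r≤N+1} (z̃ - z̃_r)`. -/
noncomputable def phiTFull (N : ℕ) (zt : Fin (N + 1) → ℂ) (ζt : Fin N → ℂ) (w : ℂ) : ℂ :=
  (∏ i, (w - ζt i)) / ∏ r, (w - zt r)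

section Mobius

variable {K : Type*} [Field K] {a b c d : K} {f : K → K}

theorem mobius_sub_mobius (hf : ∀ v, f v = (a * v + b) / (c * v + d)) {u v : K}
    (hu : c * u + d ≠ 0) (hv : c * v + d ≠ 0) :
    f u - f v = (a * d - b * c) / (c * u + d) * ((u - v) / (c * v + d)) := by
  rw [hf, hf, div_sub_div _ _ hu hv, div_mul_div_comm]
  ring

theorem mobius_sub_div (hf : ∀ v, f v = (a * v + b) / (c * v + d)) (hc : c ≠ 0) {u : K}
    (hu : c * u + d ≠ 0) :
    f u - a / c = -((a * d - b * c) / (c * (c * u + d))) := by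
  rw [hf, div_sub_div _ _ hu hc]
  ring

theorem prod_mobius_sub_mobius (hf : ∀ v, f v = (a * v + b) / (c * v + d)) {ι : Type*}
    (s : Finset ι) (v : ι → K) {u : K} (hu : c * u + d ≠ 0) (hv : ∀ i ∈ s, c * v i + d ≠ 0) :
    ∏ i ∈ s, (f u - f (v i))
      = ((a * d - b * c) / (c * u + d)) ^ s.card * ((∏ i ∈ s, (u - v i)) / ∏ i ∈ s, (c * v i + d)) := by
  rw [Finset.prod_congr rfl fun i hi => mobius_sub_mobius hf hu (hv i hi),
    Finset.prod_mul_distrib, Finset.prod_const, Finset.prod_div_distrib]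

end Mobius

theorem phiTFull_mobius {N : ℕ} {z ζ : Fin N → ℂ} {a b c d : ℂ} {f : ℂ → ℂ}
    (hf : ∀ v, f v = (a * v + b) / (c * v + d)) (hdet : a * d - b * c ≠ 0) (hc : c ≠ 0)
    (hz : ∀ r, c * z r + d ≠ 0) (hζ : ∀ i, c * ζ i + d ≠ 0)
    {zt : Fin (N + 1) → ℂ} (hzt : ∀ r : Fin N, zt r.castSucc = f (z r))
    (hztlast : zt (Fin.last N) = a / c) {u : ℂ} (hu : c * u + d ≠ 0) :
    phiTFull N zt (fun i => f (ζ i)) (f u)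
      = -(c * (c * u + d) / (a * d - b * c)) * ((∏ r, (c * z r + d)) / ∏ i, (c * ζ i + d))
          * phiFull N z ζ u := by
  rw [phiTFull, phiFull, Fin.prod_univ_castSucc, hztlast, mobius_sub_div hf hc hu]
  simp only [hzt]
  rw [prod_mobius_sub_mobius hf _ ζ hu fun i _ => hζ i,
    prod_mobius_sub_mobius hf _ z hu fun r _ => hz r]
  -- at a pole `u = z r` both sides are junk zeros of a division by `0`
  rcases eq_or_ne (∏ r, (u - z r)) 0 with hPz | hPz
  · simp [hPz]
  · field_simp

theorem statement9_general (N : ℕ) (z : Fin N → ℂ)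
    (ζp ζm : Fin N → ℂ)
    (linf : ℂ)
    (a b c d : ℝ) (hdet : (a : ℂ) * d - b * c ≠ 0) (hc : (c : ℂ) ≠ 0)
    (hzfin : ∀ r, (c : ℂ) * z r + d ≠ 0)
    (hζpfin : ∀ i, (c : ℂ) * ζp i + d ≠ 0) (hζmfin : ∀ i, (c : ℂ) * ζm i + d ≠ 0)
    (f : ℂ → ℂ) (hf : ∀ v, f v = ((a : ℂ) * v + b) / ((c : ℂ) * v + d))
    (zt : Fin (N + 1) → ℂ) (hzt : ∀ r : Fin N, zt r.castSucc = f (z r))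
    (hztlast : zt (Fin.last N) = (a : ℂ) / c)
    (ωp ωm : ℂ)
    (hωp : ωp = (∏ r, ((c : ℂ) * z r + d)) / ∏ i, ((c : ℂ) * ζp i + d))
    (hωm : ωm = (∏ r, ((c : ℂ) * z r + d)) / ∏ i, ((c : ℂ) * ζm i + d))
    (ltinf : ℂ)
    (hltinf : ltinf = linf * ((a : ℂ) * d - b * c) / ((c : ℂ) ^ 2 * ωp * ωm))
    (u : ℂ) (hu1 : (c : ℂ) * u + d ≠ 0) :
    (-ltinf * phiTFull N zt (fun i => f (ζp i)) (f u)
        * phiTFull N zt (fun i => f (ζm i)) (f u))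
      * (((a : ℂ) * d - b * c) / ((c : ℂ) * u + d) ^ 2)
    = -linf * phiFull N z ζp u * phiFull N z ζm u := by
  have hQz : ∏ r, ((c : ℂ) * z r + d) ≠ 0 := Finset.prod_ne_zero_iff.mpr fun r _ => hzfin r
  have hQp : ∏ i, ((c : ℂ) * ζp i + d) ≠ 0 := Finset.prod_ne_zero_iff.mpr fun i _ => hζpfin i
  have hQm : ∏ i, ((c : ℂ) * ζm i + d) ≠ 0 := Finset.prod_ne_zero_iff.mpr fun i _ => hζmfin i
  subst hωp hωm hltinf
  rw [phiTFull_mobius hf hdet hc hzfin hζpfin hzt hztlast hu1,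
    phiTFull_mobius hf hdet hc hzfin hζmfin hzt hztlast hu1]
  field_simp

/-- With `ℓ̃^∞ = ℓ^∞ (ad-bc)/(c² ω_+ ω_-)`, under the change of spectral parameter
`z̃ = f(z)` the twist function `φ = -ℓ^∞ φ_+ φ_-` transforms as a 1-form into the
factorised gauged twist function `φ̃ = -ℓ̃^∞ φ̃_+ φ̃_-`:
`φ̃(f(z)) · (ad-bc)/(cz+d)² = φ(z)`. -/
theorem statement9 (N : ℕ) (hN : 1 ≤ N) (z : Fin N → ℂ) (hz : Function.Injective z)
    (ζp ζm : Fin N → ℂ) (hζp : ∀ i r, ζp i ≠ z r) (hζm : ∀ i r, ζm i ≠ z r)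
    (linf : ℂ)
    (a b c d : ℝ) (hdet : (a : ℂ) * d - b * c ≠ 0) (hc : (c : ℂ) ≠ 0)
    (hzfin : ∀ r, (c : ℂ) * z r + d ≠ 0)
    (hζpfin : ∀ i, (c : ℂ) * ζp i + d ≠ 0) (hζmfin : ∀ i, (c : ℂ) * ζm i + d ≠ 0)
    (f : ℂ → ℂ) (hf : ∀ v, f v = ((a : ℂ) * v + b) / ((c : ℂ) * v + d))
    (zt : Fin (N + 1) → ℂ) (hzt : ∀ r : Fin N, zt r.castSucc = f (z r))
    (hztlast : zt (Fin.last N) = (a : ℂ) / c)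
    (ωp ωm : ℂ)
    (hωp : ωp = (∏ r, ((c : ℂ) * z r + d)) / ∏ i, ((c : ℂ) * ζp i + d))
    (hωm : ωm = (∏ r, ((c : ℂ) * z r + d)) / ∏ i, ((c : ℂ) * ζm i + d))
    (ltinf : ℂ)
    (hltinf : ltinf = linf * ((a : ℂ) * d - b * c) / ((c : ℂ) ^ 2 * ωp * ωm))
    (u : ℂ) (hu1 : (c : ℂ) * u + d ≠ 0) (hu2 : ∀ r, u ≠ z r) :
    (-ltinf * phiTFull N zt (fun i => f (ζp i)) (f u)
        * phiTFull N zt (fun i => f (ζm i)) (f u))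
      * (((a : ℂ) * d - b * c) / ((c : ℂ) * u + d) ^ 2)
    = -linf * phiFull N z ζp u * phiFull N z ζm u :=
  statement9_general N z ζp ζm linf a b c d hdet hc hzfin hζpfin hζmfin f hf zt hzt hztlast ωp ωm
    hωp hωm ltinf hltinf u hu1
end

section
/- For every r ∈ {1,…,M}, one has Σ_{s=1}^{M} ρ_{rs} = κ_r/2 and Σ_{s=1}^{M} ρ_{sr} = −κ_r/2. Equivalently, Σ_{s=1}^{M} ρ_{rs} − κ_r/2 = 0 and Σ_{s=1}^{M} ρ_{sr} + κ_r/2 = 0 (the identity ensuring that the constraint of the gauged coupled σ-model vanishes on-shell and that its action is gauge invariant). -/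
/-!
Since `∏ᵢ (z - ηᵢ)` has degree `M - 1 < M`, Lagrange interpolation at the nodes `w_s`
gives `∏ᵢ (z - ηᵢ) = ∑_s ψ^s(w_s) ∏_{t ≠ s} (z - w_t)`. Dividing by `∏_{t ≠ r} (z - w_t)`
shows that near `w_r`
`ψ^r(z) = ψ^r(w_r) + ∑_{s ≠ r} ψ^s(w_s) (z - w_r) / (z - w_s)`,
hence `(ψ^r)'(w_r) = ∑_{s ≠ r} ψ^s(w_s) / (w_r - w_s)`. So the off-diagonal part of the
`r`-th row of `ρ` is `(λ/2) ψ^r_+(w_r) (ψ^r_-)'(w_r)`, that of the `r`-th column is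
`-(λ/2) (ψ^r_+)'(w_r) ψ^r_-(w_r)`, and adding `ρ_{rr}` gives `±κ_r/2`.
-/

/-- The function `ψ^r_±(v) = (v - w_r) ψ_±(v)`, where
`ψ_±(v) = ∏_{i<M-1} (v - η^±_i) / ∏_{s<M} (v - w_s)`, with the pole at `w_r` removed so
that it is defined (and differentiable) at `v = w_r`. -/
noncomputable def psiReg (M : ℕ) (w : Fin M → ℂ) (η : Fin (M - 1) → ℂ) (r : Fin M)
    (v : ℂ) : ℂ :=
  (∏ i, (v - η i)) / ∏ s ∈ Finset.univ.erase r, (v - w s)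

open Finset Polynomial Lagrange Filter Topology

theorem Lagrange.eval_eq_sum_nodalWeight_mul_eval_nodal_erase {F ι : Type*} [Field F]
    [DecidableEq ι] {s : Finset ι} {v : ι → F} (hvs : Set.InjOn v s) {P : F[X]}
    (hP : P.degree < #s) (x : F) :
    P.eval x = ∑ i ∈ s, P.eval (v i) * nodalWeight s v i * (nodal (s.erase i) v).eval x := by
  conv_lhs => rw [eq_interpolate hvs hP]
  rw [interpolate_apply, eval_finsetSum]
  refine sum_congr rfl fun i hi => ?_
  rw [eval_mul, eval_C, basis_eq_prod_sub_inv_mul_nodal_div hi, ← nodal_erase_eq_nodal_div hi,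
    eval_mul, eval_C]
  ring

theorem hasDerivAt_sub_div_sub {𝕜 : Type*} [NontriviallyNormedField 𝕜] {a b : 𝕜}
    (hab : a ≠ b) : HasDerivAt (fun z => (z - a) / (z - b)) (a - b)⁻¹ a := by
  have hba : a - b ≠ 0 := sub_ne_zero.mpr hab
  refine (((hasDerivAt_id' a).sub_const a).fun_div
    ((hasDerivAt_id' a).sub_const b) hba).congr_deriv ?_
  rw [sub_self, zero_mul, sub_zero, one_mul, sq, div_mul_cancel_left₀ hba]

section psiReg

variable {M : ℕ} {w : Fin M → ℂ} (η : Fin (M - 1) → ℂ)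

theorem psiReg_eq_eval_div (r : Fin M) (v : ℂ) :
    psiReg M w η r v = (nodal univ η).eval v / (nodal (univ.erase r) w).eval v := by
  simp only [psiReg, eval_nodal]

theorem psiReg_self_eq (r : Fin M) :
    psiReg M w η r (w r) = (nodal univ η).eval (w r) * nodalWeight univ w r := by
  rw [psiReg_eq_eval_div, nodalWeight_eq_eval_nodal_erase_inv, div_eq_mul_inv]

/-- Unlike the partial fraction expansion of `ψ`, this also holds at `z = w r`. -/
theorem psiReg_eq_add_sum (hw : Function.Injective w) (r : Fin M) {z : ℂ}
    (hz : ∀ s ∈ univ.erase r, z ≠ w s) :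
    psiReg M w η r z = psiReg M w η r (w r)
      + ∑ s ∈ univ.erase r, psiReg M w η s (w s) * ((z - w r) / (z - w s)) := by
  set Q : Fin M → ℂ := fun s => (nodal (univ.erase s) w).eval z
  have hQr : Q r ≠ 0 := by
    simpa only [Q, eval_nodal] using prod_ne_zero_iff.mpr fun s hs => sub_ne_zero.mpr (hz s hs)
  have hdeg : (nodal univ η).degree < #(univ : Finset (Fin M)) := by
    rw [degree_nodal, card_univ, card_univ, Fintype.card_fin, Fintype.card_fin]
    exact_mod_cast Nat.sub_lt r.pos one_pos
  have hratio : ∀ s ∈ univ.erase r, Q s / Q r = (z - w r) / (z - w s) := by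
    intro s hs
    rw [div_eq_div_iff hQr (sub_ne_zero.mpr (hz s hs))]
    simp only [Q, eval_nodal]
    rw [prod_erase_mul _ (fun i => z - w i) (mem_univ s),
      mul_prod_erase _ (fun i => z - w i) (mem_univ r)]
  rw [psiReg_eq_eval_div, eval_eq_sum_nodalWeight_mul_eval_nodal_erase hw.injOn hdeg,
    ← add_sum_erase _ _ (mem_univ r), add_div, sum_div, mul_div_cancel_right₀ _ hQr]
  refine congrArg₂ _ (psiReg_self_eq η r).symm (sum_congr rfl fun s hs => ?_)
  rw [mul_div_assoc, hratio s hs, psiReg_self_eq]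

theorem deriv_psiReg_self (hw : Function.Injective w) (r : Fin M) :
    deriv (psiReg M w η r) (w r)
      = ∑ s ∈ univ.erase r, psiReg M w η s (w s) / (w r - w s) := by
  have hne : ∀ s ∈ univ.erase r, w r ≠ w s := fun s hs => hw.ne (mem_erase.mp hs).1.symm
  have hnear : psiReg M w η r =ᶠ[𝓝 (w r)] fun z => psiReg M w η r (w r)
      + ∑ s ∈ univ.erase r, psiReg M w η s (w s) * ((z - w r) / (z - w s)) := by
    filter_upwards [(eventually_all_finset _).mpr fun s hs => eventually_ne_nhds (hne s hs)]
      with z hz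
    exact psiReg_eq_add_sum η hw r hz
  have hderiv := (HasDerivAt.fun_sum fun s hs =>
    (hasDerivAt_sub_div_sub (hne s hs)).const_mul (psiReg M w η s (w s))).const_add
      (psiReg M w η r (w r))
  rw [hnear.deriv_eq, hderiv.deriv]
  simp only [div_eq_mul_inv]

end psiReg

theorem statement11_general (M : ℕ) (w : Fin M → ℂ) (hw : Function.Injective w)
    (ηp ηm : Fin (M - 1) → ℂ)
    (lam : ℂ)
    (κ : Fin M → ℂ)
    (hκ : ∀ r, κ r = lam / 2 *
      (psiReg M w ηp r (w r) * deriv (psiReg M w ηm r) (w r)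
        + deriv (psiReg M w ηp r) (w r) * psiReg M w ηm r (w r)))
    (ρ : Fin M → Fin M → ℂ)
    (hρdiag : ∀ r, ρ r r = lam / 4 *
      (deriv (psiReg M w ηp r) (w r) * psiReg M w ηm r (w r)
        - psiReg M w ηp r (w r) * deriv (psiReg M w ηm r) (w r)))
    (hρoff : ∀ r s, r ≠ s →
      ρ r s = lam / 2 * psiReg M w ηp r (w r) * psiReg M w ηm s (w s) / (w r - w s)) :
    ∀ r, (∑ s, ρ r s = κ r / 2) ∧ (∑ s, ρ s r = -(κ r) / 2) := by
  intro r
  have hrow : ∑ s ∈ univ.erase r, ρ r s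
      = lam / 2 * psiReg M w ηp r (w r) * deriv (psiReg M w ηm r) (w r) := by
    rw [deriv_psiReg_self ηm hw, mul_sum]
    refine sum_congr rfl fun s hs => ?_
    rw [hρoff r s (mem_erase.mp hs).1.symm, mul_div_assoc]
  have hcol : ∑ s ∈ univ.erase r, ρ s r
      = -(lam / 2 * psiReg M w ηm r (w r) * deriv (psiReg M w ηp r) (w r)) := by
    rw [deriv_psiReg_self ηp hw, mul_sum, ← sum_neg_distrib]
    refine sum_congr rfl fun s hs => ?_
    rw [hρoff s r (mem_erase.mp hs).1, ← neg_sub (w r), div_neg]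
    ring
  constructor
  · rw [← add_sum_erase _ _ (mem_univ r), hrow, hρdiag, hκ]
    ring
  · rw [← add_sum_erase _ _ (mem_univ r), hcol, hρdiag, hκ]
    ring

/-- The identity `∑_s ρ_{rs} = κ_r/2` and `∑_s ρ_{sr} = -κ_r/2` ensuring that the
constraint of the gauged coupled σ-model vanishes on-shell and that its action is gauge
invariant. -/
theorem statement11 (M : ℕ) (hM : 1 ≤ M) (w : Fin M → ℂ) (hw : Function.Injective w)
    (ηp ηm : Fin (M - 1) → ℂ) (hηp : ∀ i r, ηp i ≠ w r) (hηm : ∀ i r, ηm i ≠ w r)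
    (lam : ℂ)
    (κ : Fin M → ℂ)
    (hκ : ∀ r, κ r = lam / 2 *
      (psiReg M w ηp r (w r) * deriv (psiReg M w ηm r) (w r)
        + deriv (psiReg M w ηp r) (w r) * psiReg M w ηm r (w r)))
    (ρ : Fin M → Fin M → ℂ)
    (hρdiag : ∀ r, ρ r r = lam / 4 *
      (deriv (psiReg M w ηp r) (w r) * psiReg M w ηm r (w r)
        - psiReg M w ηp r (w r) * deriv (psiReg M w ηm r) (w r)))
    (hρoff : ∀ r s, r ≠ s →
      ρ r s = lam / 2 * psiReg M w ηp r (w r) * psiReg M w ηm s (w s) / (w r - w s)) :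
    ∀ r, (∑ s, ρ r s = κ r / 2) ∧ (∑ s, ρ s r = -(κ r) / 2) :=
  statement11_general M w hw ηp ηm lam κ hκ ρ hρdiag hρoff
end
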